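/- arXiv:1307.5033 — 6 statements merged into one kernel-verified Lean document; each statement's English description precedes it below -/
import Mathlib

section
/- For an n-by-n complex matrix A with n ≥ 2 and any point z in the interior of the numerical range F(A) = {x*Ax : x ∈ ℂⁿ, x*x = 1}, the preimage f_A⁻¹(z) = {x ∈ ℂⁿ : x*x = 1, x*Ax = z} contains n linearly independent vectors. -/
open Matrix

/-- The field of values generating function `f_A(x) = x* A x`. -/
noncomputable def fA {m : Type*} [Fintype m] (A : Matrix m m ℂ) (x : m → ℂ) : ℂ :=
  star x ⬝ᵥ A.mulVec x

/-- The numerical range (field of values) of `A`. -/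
def NR {m : Type*} [Fintype m] (A : Matrix m m ℂ) : Set ℂ :=
  {z | ∃ x, star x ⬝ᵥ x = 1 ∧ fA A x = z}

/-- Euclidean norm on `m → ℂ`. -/
noncomputable def enorm {m : Type*} [Fintype m] (x : m → ℂ) : ℝ :=
  Real.sqrt (∑ i, ‖x i‖ ^ 2)

/-- Projective distance: infimum of `‖x - ω • y‖` over unimodular `ω`. -/
noncomputable def projDist {m : Type*} [Fintype m] (x y : m → ℂ) : ℝ :=
  sInf {d | ∃ ω : ℂ, ‖ω‖ = 1 ∧ d = _root_.enorm (x - ω • y)}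

/-!
Put `B = A - z • 1`, so that the unit vectors of the cone `{x | x* B x = 0}` form the fiber
`f_A⁻¹(z)`; it suffices to show that this cone spans `ℂⁿ`. Let `u` be a vector outside it and
`p = u* B u ≠ 0`. Since `z` is interior, some unit `w` has `w* B w = -s p` with `s > 0`. Choosing a
phase `ω` that makes the cross term of `u` and `ω w` a real multiple `r p`, the form on the real line
`τ ↦ u + τ ω w` equals `p (1 + r τ - s τ²)`, which has two distinct real roots. The two resulting
points of the cone span `u`.
-/

open Filter Topology Submodule

theorem exists_pos_sub_smul_mem_of_mem_interior {E : Type*} [NormedAddCommGroup E]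
    [NormedSpace ℝ E] {S : Set E} {z : E} (hz : z ∈ interior S) (p : E) :
    ∃ s : ℝ, 0 < s ∧ z - s • p ∈ S := by
  have hlim : Tendsto (fun s : ℝ => z - s • p) (𝓝[>] 0) (𝓝 z) :=
    tendsto_nhdsWithin_of_tendsto_nhds <|
      (show Continuous fun s : ℝ => z - s • p by fun_prop).tendsto' 0 z (by simp)
  exact (eventually_mem_nhdsWithin.and (hlim.eventually (mem_interior_iff_mem_nhds.mp hz))).exists

theorem exists_two_roots_one_add_mul_sub_mul_sq (r : ℝ) {s : ℝ} (hs : 0 < s) :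
    ∃ τ₁ τ₂ : ℝ, τ₁ ≠ τ₂ ∧ 1 + r * τ₁ - s * τ₁ ^ 2 = 0 ∧ 1 + r * τ₂ - s * τ₂ ^ 2 = 0 := by
  set d := Real.sqrt (r ^ 2 + 4 * s)
  have hd : d * d = r ^ 2 + 4 * s := Real.mul_self_sqrt (by positivity)
  have hd_pos : 0 < d := Real.sqrt_pos.mpr (by positivity)
  refine ⟨(r + d) / (2 * s), (r - d) / (2 * s), ?_, ?_, ?_⟩
  · rw [Ne, div_left_inj' (by positivity)]
    linarith
  all_goals field_simp; linear_combination (-1 : ℝ) * hd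

theorem exists_phase_mul_add_eq_real_mul (a b : ℂ) {p : ℂ} (hp : p ≠ 0) :
    ∃ (ω : ℂ) (r : ℝ), star ω * ω = 1 ∧ ω * a + star ω * b = r * p := by
  -- `ω` turns `γ` onto the real axis, and `(ω a + ω̄ b) / p` differs from `ω γ` by a real number.
  set γ := a / p - star (b / p)
  set ω := Complex.exp (-(γ.arg * Complex.I))
  have hωγ : ω * γ = ‖γ‖ := by
    conv_lhs => rw [← Complex.norm_mul_exp_arg_mul_I γ]
    rw [mul_left_comm, ← Complex.exp_add, neg_add_cancel, Complex.exp_zero, mul_one]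
  have hω : star ω * ω = 1 := by
    rw [Complex.star_def, Complex.conj_mul', Complex.norm_exp]
    simp
  refine ⟨ω, ‖γ‖ + 2 * (ω * star (b / p)).re, hω, ?_⟩
  have key : ω * (a / p) + star ω * (b / p)
      = ω * γ + (ω * star (b / p) + (starRingEnd ℂ) (ω * star (b / p))) := by
    simp only [γ, ← Complex.star_def, star_mul', star_star]
    ring
  rw [hωγ, Complex.add_conj] at key
  field_simp at key
  push_cast at key ⊢
  linear_combination key

section QuadraticForm

open scoped ComplexOrder

variable {m : Type*} [Fintype m]

theorem fA_smul (B : Matrix m m ℂ) (c : ℂ) (x : m → ℂ) :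
    fA B (c • x) = star c * c * fA B x := by
  simp only [fA, mulVec_smul, dotProduct_smul, star_smul, smul_dotProduct, smul_eq_mul]
  ring

theorem fA_add_smul (B : Matrix m m ℂ) (u w : m → ℂ) (c : ℂ) :
    fA B (u + c • w) = fA B u + c * (star u ⬝ᵥ B *ᵥ w) + star c * (star w ⬝ᵥ B *ᵥ u)
      + star c * c * fA B w := by
  simp only [fA, mulVec_add, mulVec_smul, dotProduct_add, dotProduct_smul, star_add, star_smul,
    add_dotProduct, smul_dotProduct, smul_eq_mul]
  ring

theorem fA_sub_smul_one [DecidableEq m] (A : Matrix m m ℂ) (z : ℂ) (x : m → ℂ) :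
    fA (A - z • 1) x = fA A x - z * (star x ⬝ᵥ x) := by
  simp [fA, sub_mulVec, smul_mulVec, dotProduct_sub]

theorem exists_dotProduct_star_smul_self_eq_one {x : m → ℂ} (hx : x ≠ 0) :
    ∃ c : ℂ, star (c • x) ⬝ᵥ (c • x) = 1 := by
  obtain ⟨t, ht, hxt⟩ : ∃ t > (0 : ℝ), (t : ℂ) = star x ⬝ᵥ x :=
    RCLike.pos_iff_exists_ofReal.mp (dotProduct_star_self_pos_iff.mpr hx)
  refine ⟨((Real.sqrt t)⁻¹ : ℝ), ?_⟩
  rw [star_smul, smul_dotProduct, dotProduct_smul, smul_smul, smul_eq_mul, ← hxt,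
    Complex.star_def, Complex.conj_ofReal]
  have hsqrt := Real.sqrt_pos.mpr ht
  norm_cast
  field_simp
  rw [Real.sq_sqrt ht.le]

end QuadraticForm

def unitFiber {m : Type*} [Fintype m] (A : Matrix m m ℂ) (z : ℂ) : Set (m → ℂ) :=
  {x | star x ⬝ᵥ x = 1 ∧ fA A x = z}

section Span

variable {m : Type*} [Fintype m] [DecidableEq m] {A : Matrix m m ℂ} {z : ℂ}

theorem mem_span_unitFiber_of_fA_sub_smul_one_eq_zero {x : m → ℂ}
    (hx : fA (A - z • 1) x = 0) : x ∈ span ℂ (unitFiber A z) := by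
  rcases eq_or_ne x 0 with rfl | hx0
  · exact zero_mem _
  obtain ⟨c, hc⟩ := exists_dotProduct_star_smul_self_eq_one hx0
  have hc0 : c ≠ 0 := by
    rintro rfl
    simp at hc
  have hcx : c • x ∈ unitFiber A z := by
    refine ⟨hc, ?_⟩
    have := fA_sub_smul_one A z (c • x)
    rw [fA_smul, hx, mul_zero, hc] at this
    linear_combination -this
  simpa [smul_smul, inv_mul_cancel₀ hc0] using smul_mem _ c⁻¹ (subset_span hcx)

theorem mem_span_unitFiber_of_mem_interior (hz : z ∈ interior (NR A)) (u : m → ℂ) :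
    u ∈ span ℂ (unitFiber A z) := by
  set B := A - z • 1
  set p := fA B u
  rcases eq_or_ne p 0 with hp | hp
  · exact mem_span_unitFiber_of_fA_sub_smul_one_eq_zero hp
  obtain ⟨s, hs, w, hw1, hwz⟩ := exists_pos_sub_smul_mem_of_mem_interior hz p
  have hw : fA B w = -s * p := by
    rw [fA_sub_smul_one, hwz, hw1, Complex.real_smul]
    ring
  obtain ⟨ω, r, hω, hr⟩ :=
    exists_phase_mul_add_eq_real_mul (star u ⬝ᵥ B *ᵥ w) (star w ⬝ᵥ B *ᵥ u) hp
  have hline (τ : ℝ) (hτ : 1 + r * τ - s * τ ^ 2 = 0) :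
      u + (τ * ω) • w ∈ span ℂ (unitFiber A z) := by
    apply mem_span_unitFiber_of_fA_sub_smul_one_eq_zero
    have hτ' : (1 + r * τ - s * τ ^ 2 : ℂ) = 0 := by exact_mod_cast hτ
    rw [fA_add_smul, hw, star_mul', Complex.star_def, Complex.conj_ofReal, ← Complex.star_def]
    linear_combination (τ : ℂ) * hr + (τ ^ 2 * (-s * p)) * hω + p * hτ'
  obtain ⟨τ₁, τ₂, hne, h₁, h₂⟩ := exists_two_roots_one_add_mul_sub_mul_sq r hs
  have hne' : (τ₁ - τ₂ : ℂ) ≠ 0 := sub_ne_zero.mpr (by exact_mod_cast hne)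
  have hu : (τ₁ - τ₂ : ℂ) • u
      = (τ₁ : ℂ) • (u + (τ₂ * ω) • w) - (τ₂ : ℂ) • (u + (τ₁ * ω) • w) := by
    module
  rw [← smul_mem_iff _ hne', hu]
  exact sub_mem (smul_mem _ _ (hline τ₂ h₂)) (smul_mem _ _ (hline τ₁ h₁))

end Span

theorem numericalRange_interior_preimage_linearIndependent_general
    {n : ℕ} (A : Matrix (Fin n) (Fin n) ℂ) (z : ℂ)
    (hz : z ∈ interior (NR A)) :
    ∃ v : Fin n → (Fin n → ℂ), LinearIndependent ℂ v ∧
      ∀ i, star (v i) ⬝ᵥ (v i) = 1 ∧ fA A (v i) = z := by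
  have hspan : ⊤ ≤ span ℂ (unitFiber A z) := fun u _ => mem_span_unitFiber_of_mem_interior hz u
  let b := Module.Basis.ofSpan hspan
  let b' := b.reindex (b.indexEquiv (Pi.basisFun ℂ (Fin n)))
  refine ⟨b', b'.linearIndependent, fun i => ?_⟩
  exact Module.Basis.ofSpan_subset hspan ⟨_, (b.reindex_apply _ i).symm⟩

theorem numericalRange_interior_preimage_linearIndependent
    {n : ℕ} (hn : 2 ≤ n) (A : Matrix (Fin n) (Fin n) ℂ) (z : ℂ)
    (hz : z ∈ interior (NR A)) :
    ∃ v : Fin n → (Fin n → ℂ), LinearIndependent ℂ v ∧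
      ∀ i, star (v i) ⬝ᵥ (v i) = 1 ∧ fA A (v i) = z :=
  numericalRange_interior_preimage_linearIndependent_general A z hz
end

section
/- Let S be the sphere of radius r centered at a point c in ℝ³, let x ∈ S, and for ε ∈ [0,2] let C_ε = {y ∈ S : ‖x − y‖ ≤ εr}. If T : ℝ³ → ℝ² is a linear map, then the set (ε²/4)·T(S) + (1 − ε²/4)·T(x) (i.e., {(ε²/4) w + (1 − ε²/4) T(x) : w ∈ T(S)}) is contained in T(C_ε). -/
/-!
For `z ∈ S` the point `y = x + (ε²/4)(z - x)` lies in the closed ball, `T y` is the point to be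
reached, and `⟪x - c, y - c⟫ ≥ (1 - ε²/2) r²`. Since `T` has a nontrivial kernel, moving `y` along
a kernel direction `u` with `⟪x - c, u⟫ ≥ 0` reaches `S` without changing `T y` or decreasing the
inner product, and for points of `S` that inner product bound says exactly `‖x - y'‖ ≤ εr`.
-/

open Metric
open scoped RealInnerProductSpace

theorem exists_nonneg_add_smul_mem_sphere {E : Type*} [NormedAddCommGroup E] [NormedSpace ℝ E]
    {c y u : E} {r : ℝ} (hy : y ∈ closedBall c r) (hu : u ≠ 0) :
    ∃ t : ℝ, 0 ≤ t ∧ y + t • u ∈ sphere c r := by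
  have hr : 0 ≤ r := nonempty_closedBall.mp ⟨y, hy⟩
  set b := 2 * r / ‖u‖
  have hb : 0 ≤ b := by positivity
  have hfar : r ≤ dist (y + b • u) c := by
    have hbu : ‖b • u‖ = 2 * r := by
      rw [norm_smul, Real.norm_of_nonneg hb, div_mul_cancel₀ _ (norm_ne_zero_iff.mpr hu)]
    linarith [dist_triangle (y + b • u) c y, dist_comm y c, dist_self_add_left (b • u) y,
      mem_closedBall.mp hy]
  have hcont : Continuous fun t : ℝ => dist (y + t • u) c := by fun_prop
  obtain ⟨t, ht, hdist⟩ :=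
    intermediate_value_Icc hb hcont.continuousOn ⟨by simpa using mem_closedBall.mp hy, hfar⟩
  exact ⟨t, ht.1, hdist⟩

section InnerProductSpace

variable {E : Type*} [NormedAddCommGroup E] [InnerProductSpace ℝ E] {c x y z : E} {r : ℝ}

theorem norm_sub_sq_eq_of_mem_sphere (hx : x ∈ sphere c r) (hy : y ∈ sphere c r) :
    ‖x - y‖ ^ 2 = 2 * (r ^ 2 - ⟪x - c, y - c⟫) := by
  rw [mem_sphere_iff_norm] at hx hy
  rw [show x - y = (x - c) - (y - c) by abel, norm_sub_sq_real, hx, hy]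
  ring

theorem le_inner_add_smul_sub_of_mem_sphere (hx : x ∈ sphere c r) (hz : z ∈ sphere c r)
    {s : ℝ} (hs : 0 ≤ s) : (1 - 2 * s) * r ^ 2 ≤ ⟪x - c, x + s • (z - x) - c⟫ := by
  rw [mem_sphere_iff_norm] at hx hz
  have hxz : -r ^ 2 ≤ ⟪x - c, z - c⟫ := by
    have := neg_abs_le ⟪x - c, z - c⟫
    have := abs_real_inner_le_norm (x - c) (z - c)
    rw [hx, hz] at this
    nlinarith
  have hexpand : ⟪x - c, x + s • (z - x) - c⟫ = (1 - s) * r ^ 2 + s * ⟪x - c, z - c⟫ := by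
    rw [show x + s • (z - x) - c = (1 - s) • (x - c) + s • (z - c) by module, inner_add_right,
      real_inner_smul_right, real_inner_smul_right, real_inner_self_eq_norm_sq, hx]
  rw [hexpand]
  nlinarith

theorem norm_sub_le_of_le_inner_of_mem_sphere (hx : x ∈ sphere c r) (hy : y ∈ sphere c r)
    {ε : ℝ} (hε : 0 ≤ ε) (hr : 0 ≤ r) (h : (1 - ε ^ 2 / 2) * r ^ 2 ≤ ⟪x - c, y - c⟫) :
    ‖x - y‖ ≤ ε * r := by
  have hsq : ‖x - y‖ ^ 2 ≤ (ε * r) ^ 2 := by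
    rw [norm_sub_sq_eq_of_mem_sphere hx hy]
    linarith
  exact (pow_le_pow_iff_left₀ (norm_nonneg _) (by positivity) two_ne_zero).mp hsq

end InnerProductSpace

theorem sphericalCap_image_contains_scaled_image
    (c : EuclideanSpace ℝ (Fin 3)) (r : ℝ) (hr : 0 < r)
    (x : EuclideanSpace ℝ (Fin 3)) (hx : x ∈ Metric.sphere c r)
    (ε : ℝ) (hε : ε ∈ Set.Icc (0:ℝ) 2)
    (T : EuclideanSpace ℝ (Fin 3) →ₗ[ℝ] EuclideanSpace ℝ (Fin 2)) :
    ∀ w ∈ T '' (Metric.sphere c r),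
      (ε ^ 2 / 4) • w + (1 - ε ^ 2 / 4) • T x ∈
        T '' {y ∈ Metric.sphere c r | ‖x - y‖ ≤ ε * r} := by
  rintro w ⟨z, hz, rfl⟩
  obtain ⟨hε0, hε2⟩ := hε
  have hs : ε ^ 2 / 4 ∈ Set.Icc (0 : ℝ) 1 := ⟨by positivity, by nlinarith⟩
  obtain ⟨v, hvT, hv0⟩ := Submodule.exists_mem_ne_zero_of_ne_bot
    (T.ker_ne_bot_of_finrank_lt (by simp))
  obtain ⟨u, hu0, hTu, hxu⟩ : ∃ u, u ≠ 0 ∧ T u = 0 ∧ 0 ≤ ⟪x - c, u⟫ := by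
    rcases le_total 0 ⟪x - c, v⟫ with h | h
    · exact ⟨v, hv0, hvT, h⟩
    · exact ⟨-v, neg_ne_zero.mpr hv0, by simpa using hvT, by simpa [inner_neg_right] using h⟩
  set y := x + (ε ^ 2 / 4) • (z - x)
  have hy : y ∈ closedBall c r := (convex_closedBall c r).add_smul_sub_mem
    (sphere_subset_closedBall hx) (sphere_subset_closedBall hz) hs
  obtain ⟨t, ht, hy'⟩ := exists_nonneg_add_smul_mem_sphere hy hu0
  refine ⟨y + t • u, ⟨hy', norm_sub_le_of_le_inner_of_mem_sphere hx hy' hε0 hr.le ?_⟩, ?_⟩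
  · rw [show y + t • u - c = (y - c) + t • u by abel, inner_add_right, real_inner_smul_right]
    linarith [le_inner_add_smul_sub_of_mem_sphere hx hz hs.1, mul_nonneg ht hxu]
  · simp only [y, map_add, map_smul, map_sub, hTu, smul_zero, add_zero]
    module
end

section
/- The convex hull of the spherical cap C_ε = {y ∈ S : ‖x − y‖ ≤ εr} on a sphere S of radius r contains the point (ε²/4)·s + (1 − ε²/4)·x for every s ∈ S; that is, (ε²/4)S + (1 − ε²/4)x ⊆ conv(C_ε). -/
/-!
With `t = ε² / 4` the point `p = t • s + (1 - t) • x` lies in the closed ball and satisfies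
`⟪x - c, p - c⟫ ≥ (1 - 2t) r² = r² - (ε r)² / 2`. In dimension at least three there is a unit
vector `v` orthogonal to both `p - c` and `x - c`; the chord through `p` in direction `v` has
endpoints on the sphere, and since moving along `v` does not change the inner product with
`x - c`, both endpoints are within distance `ε r` of `x`. The point `p` is their midpoint.
-/

open RealInnerProductSpace Metric Module

section

variable {E : Type*} [NormedAddCommGroup E] [InnerProductSpace ℝ E]

theorem exists_norm_eq_one_inner_eq_zero_of_two_lt_finrank (hE : 2 < finrank ℝ E) (u w : E) :
    ∃ v : E, ‖v‖ = 1 ∧ ⟪u, v⟫ = 0 ∧ ⟪w, v⟫ = 0 := by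
  classical
  set K := Submodule.span ℝ {u, w}
  have hK : K ≠ ⊤ := by
    intro hK
    have hrank := (finrank_span_finset_le_card (R := ℝ) ({u, w} : Finset E)).trans
      Finset.card_le_two
    rw [Set.finrank, Finset.coe_pair] at hrank
    change finrank ℝ K ≤ 2 at hrank
    rw [hK, finrank_top] at hrank
    omega
  have : FiniteDimensional ℝ K := FiniteDimensional.span_of_finite ℝ (Set.toFinite _)
  obtain ⟨z, hzK, hz0⟩ :=
    Submodule.exists_mem_ne_zero_of_ne_bot (mt Submodule.orthogonal_eq_bot_iff.mp hK)
  have horth : ∀ y ∈ ({u, w} : Set E), ⟪y, ‖z‖⁻¹ • z⟫ = 0 := fun y hy =>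
    (Submodule.mem_orthogonal K _).mp (K.orthogonal.smul_mem _ hzK) y (Submodule.subset_span hy)
  exact ⟨‖z‖⁻¹ • z, norm_smul_inv_norm hz0, horth u (by simp), horth w (by simp)⟩

theorem add_smul_mem_sphere_of_inner_eq_zero {c p v : E} {r a : ℝ} (hr : 0 ≤ r) (hv : ‖v‖ = 1)
    (hpv : ⟪p - c, v⟫ = 0) (ha : a ^ 2 = r ^ 2 - ‖p - c‖ ^ 2) : p + a • v ∈ sphere c r := by
  have hpyth := norm_add_sq_eq_norm_sq_add_norm_sq_real
    (by rw [real_inner_smul_right, hpv, mul_zero] : ⟪p - c, a • v⟫ = 0)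
  rw [mem_sphere, dist_eq_norm, show p + a • v - c = p - c + a • v by abel,
    ← sq_eq_sq₀ (norm_nonneg _) hr]
  rw [norm_smul, hv, Real.norm_eq_abs, mul_one, ← sq, ← sq, ← sq, sq_abs, ha] at hpyth
  linarith

theorem norm_sub_sq_of_mem_sphere {c x y : E} {r : ℝ} (hx : x ∈ sphere c r) (hy : y ∈ sphere c r) :
    ‖x - y‖ ^ 2 = 2 * r ^ 2 - 2 * ⟪x - c, y - c⟫ := by
  rw [mem_sphere, dist_eq_norm] at hx hy
  rw [show x - y = (x - c) - (y - c) by abel, norm_sub_sq_real, hx, hy]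
  ring

theorem mem_convexHull_sphericalCap (hE : 2 < finrank ℝ E) {c x p : E} {r δ : ℝ}
    (hx : x ∈ sphere c r) (hp : p ∈ closedBall c r) (hδ : 0 ≤ δ)
    (hpx : r ^ 2 - δ ^ 2 / 2 ≤ ⟪x - c, p - c⟫) :
    p ∈ convexHull ℝ {y ∈ sphere c r | ‖x - y‖ ≤ δ} := by
  obtain ⟨v, hv, hpv, hxv⟩ :=
    exists_norm_eq_one_inner_eq_zero_of_two_lt_finrank hE (p - c) (x - c)
  have hr : 0 ≤ r := nonneg_of_mem_sphere hx
  have hpc : ‖p - c‖ ≤ r := by rwa [mem_closedBall, dist_eq_norm] at hp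
  have mem_cap : ∀ a : ℝ, a ^ 2 = r ^ 2 - ‖p - c‖ ^ 2 →
      p + a • v ∈ convexHull ℝ {y ∈ sphere c r | ‖x - y‖ ≤ δ} := by
    intro a ha
    have hy := add_smul_mem_sphere_of_inner_eq_zero hr hv hpv ha
    have hinner : ⟪x - c, p + a • v - c⟫ = ⟪x - c, p - c⟫ := by
      rw [show p + a • v - c = p - c + a • v by abel, inner_add_right, real_inner_smul_right,
        real_inner_comm, hxv, mul_zero, add_zero]
    refine subset_convexHull ℝ _ ⟨hy, ?_⟩
    rw [← sq_le_sq₀ (norm_nonneg _) hδ, norm_sub_sq_of_mem_sphere hx hy, hinner]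
    linarith
  have hsq : √(r ^ 2 - ‖p - c‖ ^ 2) ^ 2 = r ^ 2 - ‖p - c‖ ^ 2 :=
    Real.sq_sqrt (by nlinarith [norm_nonneg (p - c)])
  convert convex_convexHull ℝ _ (mem_cap _ hsq) (mem_cap _ (by rwa [neg_sq]))
    (by norm_num : (0 : ℝ) ≤ 1 / 2) (by norm_num : (0 : ℝ) ≤ 1 / 2) (by norm_num) using 1
  module

theorem le_inner_smul_add_smul_sub_of_mem_sphere {c x s : E} {r t : ℝ}
    (hx : x ∈ sphere c r) (hs : s ∈ sphere c r) (ht : 0 ≤ t) :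
    (1 - 2 * t) * r ^ 2 ≤ ⟪x - c, t • s + (1 - t) • x - c⟫ := by
  rw [mem_sphere, dist_eq_norm] at hx hs
  have hxs : -(r ^ 2) ≤ ⟪x - c, s - c⟫ := by
    have := neg_le_of_abs_le (abs_real_inner_le_norm (x - c) (s - c))
    rwa [hx, hs, ← sq] at this
  rw [show t • s + (1 - t) • x - c = t • (s - c) + (1 - t) • (x - c) by module,
    inner_add_right, real_inner_smul_right, real_inner_smul_right, real_inner_self_eq_norm_sq, hx]
  nlinarith

end

theorem convexHull_sphericalCap_contains_scaled_sphere_general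
    (c : EuclideanSpace ℝ (Fin 3)) (r : ℝ)
    (x : EuclideanSpace ℝ (Fin 3)) (hx : x ∈ Metric.sphere c r)
    (ε : ℝ) (hε : ε ∈ Set.Icc (0:ℝ) 2) :
    ∀ s ∈ Metric.sphere c r,
      (ε ^ 2 / 4) • s + (1 - ε ^ 2 / 4) • x ∈
        convexHull ℝ {y ∈ Metric.sphere c r | ‖x - y‖ ≤ ε * r} := by
  intro s hs
  obtain ⟨hε0, hε2⟩ := hε
  have ht0 : 0 ≤ ε ^ 2 / 4 := by positivity
  have ht1 : ε ^ 2 / 4 ≤ 1 := by nlinarith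
  refine mem_convexHull_sphericalCap (by simp) hx ?_ (mul_nonneg hε0 (nonneg_of_mem_sphere hx)) ?_
  · exact convex_closedBall c r (sphere_subset_closedBall hs) (sphere_subset_closedBall hx)
      ht0 (by linarith) (by ring)
  · linarith [le_inner_smul_add_smul_sub_of_mem_sphere hx hs ht0]

theorem convexHull_sphericalCap_contains_scaled_sphere
    (c : EuclideanSpace ℝ (Fin 3)) (r : ℝ) (hr : 0 < r)
    (x : EuclideanSpace ℝ (Fin 3)) (hx : x ∈ Metric.sphere c r)
    (ε : ℝ) (hε : ε ∈ Set.Icc (0:ℝ) 2) :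
    ∀ s ∈ Metric.sphere c r,
      (ε ^ 2 / 4) • s + (1 - ε ^ 2 / 4) • x ∈
        convexHull ℝ {y ∈ Metric.sphere c r | ‖x - y‖ ≤ ε * r} :=
  convexHull_sphericalCap_contains_scaled_sphere_general c r x hx ε hε
end

section
/- Let A ∈ M_n(ℂ) and suppose z = x*Ax with x a unit vector in ℂⁿ. For any open neighborhood U of x in the unit sphere of ℂⁿ, there exists δ > 0 such that δ·F(A) + (1−δ)·z ⊆ f_A(U), where δ·F(A) + (1−δ)z = {δw + (1−δ)z : w ∈ F(A)}. -/
/-!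
Fix orthonormal `x, v`. On the unit vectors `a • x + b • v` the quadratic form `u ↦ ⟪u, T u⟫`
factors through the Bloch map `B(a, b) = (2 Re (ā b), 2 Im (ā b), |a|² - |b|²)`, which maps onto
the unit sphere of `ℝ³`, followed by a real affine map `ℝ³ → ℂ`. If `y = a • x + b • v`, the
value `δ ⟪y, T y⟫ + (1 - δ) ⟪x, T x⟫` is then the image of the point
`p = δ B(a, b) + (1 - δ) B(1, 0)` of the unit ball, which lies within `2δ` of the pole `B(1, 0)`.
The linear part `ℝ³ → ℂ` has a nonzero kernel by dimension count, and moving `p` along it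
reaches the sphere within distance `2√δ`; lifting that point back through `B` gives a unit
vector `u` near `x` with the required value of `⟪u, T u⟫`.
-/

open Matrix

open scoped InnerProductSpace ComplexConjugate
open Complex (I)

section Sphere

variable {F : Type*} [NormedAddCommGroup F] [InnerProductSpace ℝ F]

lemma exists_norm_add_smul_eq_one {p k : F} (hp : ‖p‖ ≤ 1) (hk : k ≠ 0) :
    ∃ τ : ℝ, ‖p + τ • k‖ = 1 ∧ ‖τ • k‖ ^ 2 ≤ 1 - ‖p‖ ^ 2 := by
  wlog hpk : 0 ≤ ⟪p, k⟫_ℝ generalizing k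
  · obtain ⟨τ, h1, h2⟩ := this (neg_ne_zero.mpr hk) (by rw [inner_neg_right]; linarith)
    exact ⟨-τ, by simpa using h1, by simpa using h2⟩
  have hK : 0 < ‖k‖ ^ 2 := by positivity
  have hD : 0 ≤ 1 - ‖p‖ ^ 2 := by nlinarith [norm_nonneg p]
  -- the nonnegative root of `‖k‖² τ² + 2 ⟪p, k⟫ τ = 1 - ‖p‖²`
  set τ := (√(⟪p, k⟫_ℝ ^ 2 + ‖k‖ ^ 2 * (1 - ‖p‖ ^ 2)) - ⟪p, k⟫_ℝ) / ‖k‖ ^ 2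
  have hS := Real.sq_sqrt (by positivity : 0 ≤ ⟪p, k⟫_ℝ ^ 2 + ‖k‖ ^ 2 * (1 - ‖p‖ ^ 2))
  have hτ0 : 0 ≤ τ := div_nonneg (by
    nlinarith [Real.sqrt_nonneg (⟪p, k⟫_ℝ ^ 2 + ‖k‖ ^ 2 * (1 - ‖p‖ ^ 2))]) hK.le
  have hτ : ‖k‖ ^ 2 * τ ^ 2 + 2 * ⟪p, k⟫_ℝ * τ = 1 - ‖p‖ ^ 2 := by
    simp only [τ]; field_simp; linear_combination hS
  have hsq : ‖τ • k‖ ^ 2 = ‖k‖ ^ 2 * τ ^ 2 := by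
    rw [norm_smul, Real.norm_eq_abs, mul_pow, sq_abs, mul_comm]
  refine ⟨τ, ?_, by nlinarith [mul_nonneg hpk hτ0]⟩
  have : ‖p + τ • k‖ ^ 2 = 1 := by
    rw [norm_add_sq_real, hsq, inner_smul_right]; linarith
  exact (pow_eq_one_iff_of_nonneg (norm_nonneg _) two_ne_zero).mp this

variable {G : Type*} [AddCommGroup G] [Module ℝ G]

lemma exists_unit_near_map_eq_of_ker_ne_bot {f : F →ₗ[ℝ] G} (hf : LinearMap.ker f ≠ ⊥)
    {m e : F} (hm : ‖m‖ = 1) (he : ‖e‖ = 1) {δ : ℝ} (hδ0 : 0 ≤ δ) (hδ1 : δ ≤ 1) :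
    ∃ q : F, ‖q‖ = 1 ∧ ‖q - e‖ ≤ 4 * √δ ∧ f q = δ • f m + (1 - δ) • f e := by
  obtain ⟨k, hk, hk0⟩ := (Submodule.ne_bot_iff _).mp hf
  set p := δ • m + (1 - δ) • e
  have hpe : ‖p - e‖ ≤ 2 * δ := by
    calc ‖p - e‖ = δ * ‖m - e‖ := by
          rw [show p - e = δ • (m - e) by module, norm_smul, Real.norm_of_nonneg hδ0]
      _ ≤ δ * 2 := by gcongr; linarith [norm_sub_le m e]
      _ = 2 * δ := mul_comm _ _
  have hp : ‖p‖ ≤ 1 := by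
    calc ‖p‖ ≤ δ * ‖m‖ + (1 - δ) * ‖e‖ := by
          refine (norm_add_le _ _).trans_eq ?_
          rw [norm_smul, norm_smul, Real.norm_of_nonneg hδ0, Real.norm_of_nonneg (by linarith)]
      _ = 1 := by rw [hm, he]; ring
  obtain ⟨τ, hq, hτk_sq⟩ := exists_norm_add_smul_eq_one hp hk0
  have hτk : ‖τ • k‖ ≤ 2 * √δ := by
    have h1 : 1 - ‖p‖ ≤ ‖p - e‖ := by linarith [norm_sub_norm_le e p, norm_sub_rev p e]
    have h2 : ‖τ • k‖ ^ 2 ≤ (2 * √δ) ^ 2 := by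
      rw [mul_pow, Real.sq_sqrt hδ0]; nlinarith [norm_nonneg p]
    exact (abs_le_of_sq_le_sq' h2 (by positivity)).2
  refine ⟨p + τ • k, hq, ?_, ?_⟩
  · have hδ : δ ≤ √δ := Real.le_sqrt_of_sq_le (by nlinarith)
    calc ‖p + τ • k - e‖ = ‖τ • k + (p - e)‖ := by congr 1; abel
      _ ≤ ‖τ • k‖ + ‖p - e‖ := norm_add_le _ _
      _ ≤ 4 * √δ := by linarith
  · rw [map_add, map_smul, LinearMap.mem_ker.mp hk, smul_zero, add_zero, map_add, map_smul,
      map_smul]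

end Sphere

noncomputable def blochVector (a b : ℂ) : EuclideanSpace ℝ (Fin 3) :=
  !₂[2 * (conj a * b).re, 2 * (conj a * b).im, ‖a‖ ^ 2 - ‖b‖ ^ 2]

lemma EuclideanSpace.norm_sq_fin_three (q : EuclideanSpace ℝ (Fin 3)) :
    ‖q‖ ^ 2 = q 0 ^ 2 + q 1 ^ 2 + q 2 ^ 2 := by
  simp [EuclideanSpace.norm_sq_eq, Fin.sum_univ_three]

lemma norm_blochVector (a b : ℂ) : ‖blochVector a b‖ = ‖a‖ ^ 2 + ‖b‖ ^ 2 := by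
  have h : ‖blochVector a b‖ ^ 2 = (‖a‖ ^ 2 + ‖b‖ ^ 2) ^ 2 := by
    rw [EuclideanSpace.norm_sq_fin_three]
    simp [blochVector, Complex.mul_re, Complex.mul_im, Complex.sq_norm, Complex.normSq_apply]
    ring
  exact (pow_left_inj₀ (norm_nonneg _) (by positivity) two_ne_zero).mp h

lemma exists_blochVector_eq {q : EuclideanSpace ℝ (Fin 3)} (hq : ‖q‖ = 1) :
    ∃ (α : ℝ) (β : ℂ), blochVector α β = q ∧
      ‖(α : ℂ) - 1‖ ^ 2 + ‖β‖ ^ 2 ≤ ‖q - blochVector 1 0‖ ^ 2 := by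
  have hq2 : q 0 ^ 2 + q 1 ^ 2 + q 2 ^ 2 = 1 := by rw [← EuclideanSpace.norm_sq_fin_three, hq]; simp
  have hdist : ‖q - blochVector 1 0‖ ^ 2 = 2 - 2 * q 2 := by
    rw [EuclideanSpace.norm_sq_fin_three]; simp [blochVector]; linear_combination hq2
  rw [hdist]
  rcases (show -1 ≤ q 2 by nlinarith).eq_or_lt with hsouth | hq2gt
  · refine ⟨0, 1, ?_, by norm_num; linarith⟩
    have h0 : q 0 = 0 := by nlinarith
    have h1 : q 1 = 0 := by nlinarith
    ext i; fin_cases i <;> simp [blochVector, h0, h1, ← hsouth]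
  set α := √((1 + q 2) / 2)
  have hα : α ^ 2 = (1 + q 2) / 2 := Real.sq_sqrt (by linarith)
  have hα0 : 0 < α := Real.sqrt_pos.mpr (by linarith)
  have hαq : q 2 ≤ α := by nlinarith
  refine ⟨α, ⟨q 0 / (2 * α), q 1 / (2 * α)⟩, ?_, ?_⟩
  · ext i; fin_cases i
    · simp [blochVector]; field_simp
    · simp [blochVector]; field_simp
    · simp [blochVector, Complex.sq_norm, Complex.normSq_apply]
      field_simp
      nlinarith
  · simp [Complex.sq_norm, Complex.normSq_apply]
    field_simp
    nlinarith

section ComplexInnerProductSpace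

variable {E : Type*} [NormedAddCommGroup E] [InnerProductSpace ℂ E]

noncomputable def blochForm (T : E →ₗ[ℂ] E) (x v : E) : EuclideanSpace ℝ (Fin 3) →ₗ[ℝ] ℂ where
  toFun q := q 0 • ((⟪x, T v⟫_ℂ + ⟪v, T x⟫_ℂ) / 2) + q 1 • (I * (⟪x, T v⟫_ℂ - ⟪v, T x⟫_ℂ) / 2)
    + q 2 • ((⟪x, T x⟫_ℂ - ⟪v, T v⟫_ℂ) / 2)
  map_add' p q := by simp only [PiLp.add_apply, add_smul]; abel
  map_smul' r q := by simp only [PiLp.smul_apply, smul_eq_mul, mul_smul, RingHom.id_apply, smul_add]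

lemma inner_map_smul_add_smul (T : E →ₗ[ℂ] E) (x v : E) {a b : ℂ}
    (hab : ‖a‖ ^ 2 + ‖b‖ ^ 2 = 1) :
    ⟪a • x + b • v, T (a • x + b • v)⟫_ℂ =
      (⟪x, T x⟫_ℂ + ⟪v, T v⟫_ℂ) / 2 + blochForm T x v (blochVector a b) := by
  set w := conj a * b
  have hw : w = w.re + w.im * I := (Complex.re_add_im w).symm
  have hw' : conj b * a = w.re - w.im * I := by apply Complex.ext <;> simp [w] <;> ring
  have hab' : ((‖a‖ ^ 2 + ‖b‖ ^ 2 : ℝ) : ℂ) = 1 := by exact_mod_cast hab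
  simp only [blochForm, blochVector, LinearMap.coe_mk, AddHom.coe_mk, map_add, map_smul,
    inner_add_left, inner_add_right, inner_smul_left, inner_smul_right, cons_val_zero,
    cons_val_one, cons_val_two, vecHead, vecTail, Function.comp_apply, Fin.succ_zero_eq_one,
    Complex.real_smul]
  push_cast at hab' ⊢
  linear_combination ⟪x, T x⟫_ℂ * Complex.conj_mul' a + ⟪v, T v⟫_ℂ * Complex.conj_mul' b
    + ⟪x, T v⟫_ℂ * hw + ⟪v, T x⟫_ℂ * hw' + (⟪x, T x⟫_ℂ + ⟪v, T v⟫_ℂ) / 2 * hab'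

lemma norm_smul_add_smul_sq {x v : E} (hx : ‖x‖ = 1) (hv : ‖v‖ = 1) (hxv : ⟪x, v⟫_ℂ = 0)
    (a b : ℂ) :
    ‖a • x + b • v‖ ^ 2 = ‖a‖ ^ 2 + ‖b‖ ^ 2 := by
  simp only [sq]
  rw [norm_add_sq_eq_norm_sq_add_norm_sq_of_inner_eq_zero _ _
    (by rw [inner_smul_left, inner_smul_right, hxv, mul_zero, mul_zero]),
    norm_smul, norm_smul, hx, hv, mul_one, mul_one]

lemma exists_unit_near_inner_map_eq_of_orthonormal (T : E →ₗ[ℂ] E) {x v : E} (hx : ‖x‖ = 1)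
    (hv : ‖v‖ = 1) (hxv : ⟪x, v⟫_ℂ = 0) {a b : ℂ} (hab : ‖a‖ ^ 2 + ‖b‖ ^ 2 = 1) {δ : ℝ}
    (hδ0 : 0 ≤ δ) (hδ1 : δ ≤ 1) :
    ∃ u : E, ‖u‖ = 1 ∧ ‖u - x‖ ≤ 4 * √δ ∧
      ⟪u, T u⟫_ℂ = δ * ⟪a • x + b • v, T (a • x + b • v)⟫_ℂ + (1 - δ) * ⟪x, T x⟫_ℂ := by
  have hker : LinearMap.ker (blochForm T x v) ≠ ⊥ := LinearMap.ker_ne_bot_of_finrank_lt <| by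
    rw [Complex.finrank_real_complex, finrank_euclideanSpace_fin]; norm_num
  obtain ⟨q, hq, hqe, hfq⟩ := exists_unit_near_map_eq_of_ker_ne_bot hker
    (e := blochVector 1 0) (by rw [norm_blochVector, hab]) (by simp [norm_blochVector]) hδ0 hδ1
  obtain ⟨α, β, rfl, hαβ⟩ := exists_blochVector_eq hq
  have hαβ1 : ‖(α : ℂ)‖ ^ 2 + ‖β‖ ^ 2 = 1 := by rw [← norm_blochVector, hq]
  refine ⟨(α : ℂ) • x + β • v, ?_, ?_, ?_⟩
  · exact (pow_eq_one_iff_of_nonneg (norm_nonneg _) two_ne_zero).mp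
      (by rw [norm_smul_add_smul_sq hx hv hxv, hαβ1])
  · have h : (α : ℂ) • x + β • v - x = ((α : ℂ) - 1) • x + β • v := by module
    rw [← sq_le_sq₀ (norm_nonneg _) (by positivity), h, norm_smul_add_smul_sq hx hv hxv]
    exact hαβ.trans (pow_le_pow_left₀ (norm_nonneg _) hqe 2)
  · have he := inner_map_smul_add_smul T x v (a := 1) (b := 0) (by simp)
    simp only [one_smul, zero_smul, add_zero] at he
    rw [inner_map_smul_add_smul T x v hαβ1, hfq, inner_map_smul_add_smul T x v hab]
    simp only [Complex.real_smul]
    push_cast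
    linear_combination ((δ : ℂ) - 1) * he

theorem exists_unit_near_inner_map_eq (T : E →ₗ[ℂ] E) {x y : E} (hx : ‖x‖ = 1) (hy : ‖y‖ = 1)
    {δ : ℝ} (hδ0 : 0 ≤ δ) (hδ1 : δ ≤ 1) :
    ∃ u : E, ‖u‖ = 1 ∧ ‖u - x‖ ≤ 4 * √δ ∧
      ⟪u, T u⟫_ℂ = δ * ⟪y, T y⟫_ℂ + (1 - δ) * ⟪x, T x⟫_ℂ := by
  set r := y - ⟪x, y⟫_ℂ • x
  have hxr : ⟪x, r⟫_ℂ = 0 := by simp [r, hx]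
  rcases eq_or_ne r 0 with hr | hr
  · have hyx : y = ⟪x, y⟫_ℂ • x := sub_eq_zero.mp hr
    have hc : conj ⟪x, y⟫_ℂ * ⟪x, y⟫_ℂ = 1 := by
      have h := congrArg norm hyx
      rw [norm_smul, hx, mul_one, hy] at h
      rw [Complex.conj_mul', ← h]; simp
    refine ⟨x, hx, by simp, ?_⟩
    rw [hyx, inner_smul_left, map_smul, inner_smul_right]
    linear_combination (-(δ : ℂ) * ⟪x, T x⟫_ℂ) * hc
  · set v := (‖r‖⁻¹ : ℂ) • r
    have hv : ‖v‖ = 1 := by simp [v, norm_smul, hr]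
    have hxv : ⟪x, v⟫_ℂ = 0 := by simp [v, hxr]
    have hyv : y = ⟪x, y⟫_ℂ • x + (‖r‖ : ℂ) • v := by
      simp [v, smul_smul, hr, r]
    have hab : ‖⟪x, y⟫_ℂ‖ ^ 2 + ‖(‖r‖ : ℂ)‖ ^ 2 = 1 := by
      rw [← norm_smul_add_smul_sq hx hv hxv, ← hyv, hy, one_pow]
    rw [hyv]
    exact exists_unit_near_inner_map_eq_of_orthonormal T hx hv hxv hab hδ0 hδ1

end ComplexInnerProductSpace

lemma fA_eq_inner {m : Type*} [Fintype m] [DecidableEq m] (A : Matrix m m ℂ) (x : m → ℂ) :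
    fA A x = ⟪WithLp.toLp 2 x, toEuclideanLin A (WithLp.toLp 2 x)⟫_ℂ := by
  simp [fA, EuclideanSpace.inner_toLp_toLp, dotProduct_comm]

lemma star_dotProduct_self_eq_one_iff {m : Type*} [Fintype m] (x : m → ℂ) :
    star x ⬝ᵥ x = 1 ↔ ‖WithLp.toLp 2 x‖ = 1 := by
  rw [dotProduct_comm, ← EuclideanSpace.inner_toLp_toLp, inner_self_eq_norm_sq_to_K (𝕜 := ℂ)]
  rw [← RCLike.ofReal_pow, ← RCLike.ofReal_one (K := ℂ), RCLike.ofReal_inj]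
  exact pow_eq_one_iff_of_nonneg (norm_nonneg _) two_ne_zero

theorem scaled_numericalRange_subset_image_of_nhd
    {n : ℕ} (A : Matrix (Fin n) (Fin n) ℂ) (x : Fin n → ℂ)
    (hx : star x ⬝ᵥ x = 1) (z : ℂ) (hz : fA A x = z)
    (U : Set (Fin n → ℂ)) (hxU : x ∈ U)
    (hU : ∃ V : Set (Fin n → ℂ), IsOpen V ∧ U = V ∩ {y | star y ⬝ᵥ y = 1}) :
    ∃ δ : ℝ, 0 < δ ∧ ∀ w ∈ NR A, (δ : ℂ) * w + (1 - (δ : ℂ)) * z ∈ fA A '' U := by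
  obtain ⟨V, hV, rfl⟩ := hU
  subst hz
  obtain ⟨ε, hε, hball⟩ :=
    Metric.isOpen_iff.mp (hV.preimage (PiLp.continuous_ofLp 2 _)) (WithLp.toLp 2 x) hxU.1
  set δ := min 1 ((ε / 8) ^ 2)
  have hδ : 0 < δ := by positivity
  have hδε : 4 * √δ < ε := by
    have : √δ ≤ ε / 8 := Real.sqrt_le_iff.mpr ⟨by positivity, min_le_right _ _⟩
    linarith
  refine ⟨δ, hδ, ?_⟩
  rintro _ ⟨y, hy, rfl⟩
  obtain ⟨u, hu, hux, hfu⟩ := exists_unit_near_inner_map_eq (toEuclideanLin A)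
    ((star_dotProduct_self_eq_one_iff x).mp hx) ((star_dotProduct_self_eq_one_iff y).mp hy)
    hδ.le (min_le_left _ _)
  refine ⟨WithLp.ofLp u, ⟨hball ?_, ?_⟩, ?_⟩
  · rw [Metric.mem_ball, dist_eq_norm]
    exact hux.trans_lt hδε
  · exact (star_dotProduct_self_eq_one_iff _).mpr hu
  · simp only [fA_eq_inner, WithLp.toLp_ofLp, hfu]
end

section
/- For every 2-by-2 complex matrix A, the multivalued inverse f_A⁻¹ is strongly continuous on all of F(A): for every z ∈ F(A), every unit vector x with x*Ax = z, and every ε > 0, there is δ > 0 such that every z' ∈ F(A) with |z' − z| < δ has a unit vector x' with x'*Ax' = z' lying within projective distance ε of x. -/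
open Matrix

/-! The Bloch map `b : ℂ² → ℝ³` sends unit vectors onto the unit sphere `S²`, turns the numerical
range map into an affine map `x* A x = L (b x) + tr A / 2` with `L : ℝ³ → ℂ` real-linear, and
`‖b x - b y‖` dominates the projective distance. So it suffices to lift points of `L(S²)` near
`L n₀` back to `S²` near `n₀`, continuously in the point: send `v` to `p + √(1 - ‖p‖²) • u`,
where `p` is the unique preimage of `v` in `(ker L)ᗮ` and `u` is the direction of the
`ker L`-component of `n₀`. -/

open Submodule

section Sphere

variable {E F : Type*} [NormedAddCommGroup E] [InnerProductSpace ℝ E]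
  [NormedAddCommGroup F] [NormedSpace ℝ F]

lemma LinearMap.apply_starProjection_orthogonal_ker [FiniteDimensional ℝ E] (L : E →ₗ[ℝ] F)
    (n : E) : L ((ker L)ᗮ.starProjection n) = L n := by
  have hker := (ker L)ᗮ.sub_starProjection_mem_orthogonal n
  rw [orthogonal_orthogonal, LinearMap.mem_ker, map_sub, sub_eq_zero] at hker
  exact hker.symm

lemma LinearMap.exists_comp_eq_starProjection_orthogonal_ker [FiniteDimensional ℝ E]
    (L : E →ₗ[ℝ] F) : ∃ G : F →ₗ[ℝ] E, ∀ n, G (L n) = (ker L)ᗮ.starProjection n := by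
  have hinj : ker (L ∘ₗ (ker L)ᗮ.subtype) = ⊥ := by
    rw [LinearMap.ker_comp, ← Submodule.disjoint_iff_comap_eq_bot]
    exact (Submodule.orthogonal_disjoint _).symm
  obtain ⟨h, hh⟩ := (L ∘ₗ (ker L)ᗮ.subtype).exists_leftInverse_of_injective hinj
  refine ⟨(ker L)ᗮ.subtype ∘ₗ h, fun n => ?_⟩
  rw [LinearMap.comp_apply, ← L.apply_starProjection_orthogonal_ker n,
    (ker L)ᗮ.starProjection_apply, ← (ker L)ᗮ.subtype_apply, ← LinearMap.comp_apply L,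
    ← LinearMap.comp_apply h, hh, LinearMap.id_apply]

lemma Submodule.exists_mem_eq_norm_smul {K : Submodule ℝ E} {w : E} (hw : w ∈ K) :
    ∃ u ∈ K, w = ‖w‖ • u ∧ (‖u‖ = 1 ∨ K = ⊥) := by
  by_cases hK : K = ⊥
  · subst hK
    exact ⟨0, zero_mem _, by simp_all, Or.inr rfl⟩
  by_cases hw0 : w = 0
  · obtain ⟨v, hvK, hv0⟩ := exists_mem_ne_zero_of_ne_bot hK
    exact ⟨‖v‖⁻¹ • v, K.smul_mem _ hvK, by simp [hw0], Or.inl (norm_smul_inv_norm hv0)⟩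
  · refine ⟨‖w‖⁻¹ • w, K.smul_mem _ hw, ?_, Or.inl (norm_smul_inv_norm hw0)⟩
    rw [smul_smul, mul_inv_cancel₀ (norm_ne_zero_iff.mpr hw0), one_smul]

lemma Submodule.norm_add_smul_sq_of_mem_orthogonal {K : Submodule ℝ E} {p u : E} (hp : p ∈ Kᗮ)
    (hu : u ∈ K) (r : ℝ) : ‖p + r • u‖ ^ 2 = ‖p‖ ^ 2 + r ^ 2 * ‖u‖ ^ 2 := by
  rw [norm_add_sq_real, inner_left_of_mem_orthogonal (K.smul_mem r hu) hp, norm_smul, mul_pow,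
    Real.norm_eq_abs, sq_abs]
  ring

lemma Submodule.norm_starProjection_eq_sqrt {K : Submodule ℝ E}
    [K.HasOrthogonalProjection] {n : E} (hn : ‖n‖ = 1) :
    ‖K.starProjection n‖ = √(1 - ‖Kᗮ.starProjection n‖ ^ 2) := by
  have hPyth := norm_sq_eq_add_norm_sq_starProjection n K
  rw [hn, one_pow] at hPyth
  rw [hPyth, add_sub_cancel_right, Real.sqrt_sq (norm_nonneg _)]

lemma LinearMap.exists_near_sphere_preimage [FiniteDimensional ℝ E]
    [FiniteDimensional ℝ F] (L : E →ₗ[ℝ] F) {n₀ : E} (hn₀ : ‖n₀‖ = 1) {ε : ℝ} (hε : 0 < ε) :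
    ∃ δ > 0, ∀ n, ‖n‖ = 1 → ‖L n - L n₀‖ < δ → ∃ n', ‖n'‖ = 1 ∧ L n' = L n ∧ ‖n' - n₀‖ < ε := by
  set K := ker L
  obtain ⟨G, hG⟩ := L.exists_comp_eq_starProjection_orthogonal_ker
  obtain ⟨u, huK, hn₀u, hu⟩ := exists_mem_eq_norm_smul (K.starProjection_apply_mem n₀)
  set Φ : F → E := fun v => G v + √(1 - ‖G v‖ ^ 2) • u
  have hΦ : Continuous Φ := by
    have := G.continuous_of_finiteDimensional
    fun_prop
  have hΦn₀ : Φ (L n₀) = n₀ := by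
    dsimp only [Φ]
    rw [hG, ← norm_starProjection_eq_sqrt hn₀, ← hn₀u, add_comm]
    exact starProjection_add_starProjection_orthogonal n₀
  obtain ⟨δ, hδ, hΦδ⟩ := Metric.continuous_iff.mp hΦ (L n₀) ε hε
  refine ⟨δ, hδ, fun n hn hnδ => ⟨Φ (L n), ?_, ?_, ?_⟩⟩
  · dsimp only [Φ]
    rw [hG]
    set p := Kᗮ.starProjection n
    have hpK : p ∈ Kᗮ := Kᗮ.starProjection_apply_mem n
    have hp : ‖p‖ ≤ 1 := hn ▸ Kᗮ.norm_starProjection_apply_le n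
    have hsq : ‖p + √(1 - ‖p‖ ^ 2) • u‖ ^ 2 = 1 := by
      rw [norm_add_smul_sq_of_mem_orthogonal hpK huK,
        Real.sq_sqrt (by nlinarith [norm_nonneg p])]
      rcases hu with hu | hK
      · rw [hu]
        ring
      · have hp1 : ‖p‖ = 1 := by simp [p, hK, hn]
        rw [hp1]
        ring
    exact (pow_eq_one_iff_of_nonneg (norm_nonneg _) two_ne_zero).mp hsq
  · dsimp only [Φ]
    rw [map_add, map_smul, LinearMap.mem_ker.mp huK, smul_zero, add_zero, hG,
      L.apply_starProjection_orthogonal_ker]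
  · simpa [hΦn₀, dist_eq_norm] using hΦδ (L n) (by rwa [dist_eq_norm])

end Sphere

open Complex ComplexConjugate

lemma star_dotProduct_self_fin_two (x : Fin 2 → ℂ) :
    star x ⬝ᵥ x = ((normSq (x 0) + normSq (x 1) : ℝ) : ℂ) := by
  simp [dotProduct, Fin.sum_univ_two, normSq_eq_conj_mul_self]

lemma normSq_add_normSq_eq_one {x : Fin 2 → ℂ} (hx : star x ⬝ᵥ x = 1) :
    normSq (x 0) + normSq (x 1) = 1 := by
  exact_mod_cast (star_dotProduct_self_fin_two x).symm.trans hx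

noncomputable def bloch (x : Fin 2 → ℂ) : EuclideanSpace ℝ (Fin 3) :=
  !₂[2 * (conj (x 0) * x 1).re, 2 * (conj (x 0) * x 1).im, normSq (x 0) - normSq (x 1)]

lemma norm_bloch (x : Fin 2 → ℂ) : ‖bloch x‖ = normSq (x 0) + normSq (x 1) := by
  rw [EuclideanSpace.norm_eq, Real.sqrt_eq_iff_eq_sq (by positivity)
    (add_nonneg (normSq_nonneg _) (normSq_nonneg _))]
  simp only [bloch, Fin.sum_univ_three, Real.norm_eq_abs, sq_abs, normSq_apply, mul_re, mul_im,
    conj_re, conj_im, cons_val_zero, cons_val_one, cons_val_two,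
    head_cons, tail_cons, PiLp.toLp_apply]
  ring

lemma norm_bloch_sub_sq (x y : Fin 2 → ℂ) :
    ‖bloch x - bloch y‖ ^ 2 = (normSq (x 0) + normSq (x 1) + (normSq (y 0) + normSq (y 1))) ^ 2
      - 4 * normSq (star x ⬝ᵥ y) := by
  rw [EuclideanSpace.norm_eq, Real.sq_sqrt (by positivity)]
  simp only [bloch, Fin.sum_univ_three, PiLp.sub_apply, Real.norm_eq_abs, sq_abs, normSq_apply,
    dotProduct, Fin.sum_univ_two, Pi.star_apply, star_def, mul_re, mul_im, conj_re, conj_im,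
    add_re, add_im, cons_val_zero, cons_val_one, cons_val_two,
    head_cons, tail_cons]
  ring

lemma bloch_surjective {n : EuclideanSpace ℝ (Fin 3)} (hn : ‖n‖ = 1) :
    ∃ x : Fin 2 → ℂ, star x ⬝ᵥ x = 1 ∧ bloch x = n := by
  have hn' : n 0 ^ 2 + n 1 ^ 2 + n 2 ^ 2 = 1 := by
    simpa [EuclideanSpace.norm_eq, Fin.sum_univ_three] using hn
  simp only [star_dotProduct_self_fin_two, ofReal_eq_one]
  by_cases hsouth : n 2 = -1
  · have h0 : n 0 = 0 := by nlinarith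
    have h1 : n 1 = 0 := by nlinarith
    refine ⟨![0, 1], by simp, ?_⟩
    ext i
    fin_cases i <;> simp [bloch, h0, h1, hsouth]
  have hlt : -1 < n 2 :=
    lt_of_le_of_ne (by nlinarith [sq_nonneg (n 0), sq_nonneg (n 1)]) (Ne.symm hsouth)
  set t := √((1 + n 2) / 2)
  have ht : 0 < t := Real.sqrt_pos.mpr (by linarith)
  have ht2 : t ^ 2 = (1 + n 2) / 2 := Real.sq_sqrt (by linarith)
  refine ⟨![t, ⟨n 0 / (2 * t), n 1 / (2 * t)⟩], ?_, ?_⟩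
  · simp only [cons_val_zero, cons_val_one, normSq_ofReal, normSq_mk]
    field_simp
    nlinarith
  · ext i
    fin_cases i <;>
      simp only [bloch, Fin.isValue, Fin.zero_eta, Fin.mk_one, Fin.reduceFinMk, cons_val,
        cons_val_zero, cons_val_one, cons_val_fin_one, conj_ofReal, mul_re, mul_im, ofReal_re,
        ofReal_im, zero_mul, sub_zero, add_zero, normSq_ofReal, normSq_mk, PiLp.toLp_apply] <;>
      field_simp
    nlinarith

/-- The coefficients of `A` on the Pauli matrices `σ₁, σ₂, σ₃`. -/
noncomputable def pauliCoeff (A : Matrix (Fin 2) (Fin 2) ℂ) : Fin 3 → ℂ :=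
  ![(A 0 1 + A 1 0) / 2, I * (A 0 1 - A 1 0) / 2, (A 0 0 - A 1 1) / 2]

noncomputable def pauliPairing (A : Matrix (Fin 2) (Fin 2) ℂ) :
    EuclideanSpace ℝ (Fin 3) →ₗ[ℝ] ℂ :=
  Fintype.linearCombination ℝ (pauliCoeff A) ∘ₗ (WithLp.linearEquiv 2 ℝ (Fin 3 → ℝ)).toLinearMap

lemma pauliPairing_apply (A : Matrix (Fin 2) (Fin 2) ℂ) (n : EuclideanSpace ℝ (Fin 3)) :
    pauliPairing A n = ∑ i, n i • pauliCoeff A i :=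
  rfl

-- `x x* = (1 + b(x) • σ) / 2` for unit `x`, and `x* A x = tr (A x x*)`
lemma fA_eq_pauliPairing_bloch_add (A : Matrix (Fin 2) (Fin 2) ℂ) {x : Fin 2 → ℂ}
    (hx : star x ⬝ᵥ x = 1) : fA A x = pauliPairing A (bloch x) + A.trace / 2 := by
  have hx' : conj (x 0) * x 0 + conj (x 1) * x 1 = 1 := by
    simpa [dotProduct, Fin.sum_univ_two] using hx
  have hre := add_conj (conj (x 0) * x 1)
  have him := sub_conj (conj (x 0) * x 1)
  simp only [map_mul, conj_conj] at hre him
  simp only [fA, pauliPairing_apply, pauliCoeff, bloch, Fin.sum_univ_three,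
    cons_val_zero, cons_val_one, cons_val_two, head_cons,
    tail_cons, dotProduct, mulVec, Fin.sum_univ_two, Pi.star_apply, star_def,
    trace_fin_two, real_smul]
  push_cast [normSq_eq_conj_mul_self] at hre him ⊢
  linear_combination ((A 0 1 + A 1 0) / 2) * hre + ((A 0 1 - A 1 0) / 2) * him
    + ((A 0 0 + A 1 1) / 2) * hx'

lemma projDist_le_enorm_sub_smul {m : Type*} [Fintype m] (x y : m → ℂ) {ω : ℂ} (hω : ‖ω‖ = 1) :
    projDist x y ≤ _root_.enorm (x - ω • y) :=
  csInf_le ⟨0, by rintro _ ⟨_, _, rfl⟩; exact Real.sqrt_nonneg _⟩ ⟨ω, hω, rfl⟩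

lemma enorm_sub_smul_sq (x y : Fin 2 → ℂ) {ω : ℂ} (hω : ‖ω‖ = 1) :
    _root_.enorm (x - ω • y) ^ 2 = normSq (x 0) + normSq (x 1) + (normSq (y 0) + normSq (y 1))
      - 2 * (ω * (star x ⬝ᵥ y)).re := by
  have hω' : normSq ω = 1 := by rw [← Complex.sq_norm, hω, one_pow]
  rw [_root_.enorm, Real.sq_sqrt (by positivity)]
  simp only [Fin.sum_univ_two, Pi.sub_apply, Pi.smul_apply, smul_eq_mul, Complex.sq_norm,
    normSq_apply, dotProduct, Pi.star_apply, star_def, sub_re, sub_im, mul_re, mul_im, add_re,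
    add_im, conj_re, conj_im] at hω' ⊢
  linear_combination ((y 0).re ^ 2 + (y 0).im ^ 2 + (y 1).re ^ 2 + (y 1).im ^ 2) * hω'

lemma projDist_le_norm_bloch_sub {x y : Fin 2 → ℂ} (hx : star x ⬝ᵥ x = 1) (hy : star y ⬝ᵥ y = 1) :
    projDist x y ≤ ‖bloch x - bloch y‖ := by
  obtain ⟨ω, hω, hωg⟩ := exists_norm_eq_mul_self (star x ⬝ᵥ y)
  have hbloch := norm_bloch_sub_sq x y
  have henorm := enorm_sub_smul_sq x y hω
  rw [← hωg, ofReal_re] at henorm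
  rw [normSq_eq_norm_sq (star x ⬝ᵥ y)] at hbloch
  rw [normSq_add_normSq_eq_one hx, normSq_add_normSq_eq_one hy] at hbloch henorm
  refine (projDist_le_enorm_sub_smul x y hω).trans ?_
  -- with `g = x* y`: `projDist² ≤ 2 - 2‖g‖ ≤ 4 - 4‖g‖² = ‖b x - b y‖²`, as `‖g‖ ≤ 1`
  have hg : ‖star x ⬝ᵥ y‖ ≤ 1 := by
    nlinarith [norm_nonneg (star x ⬝ᵥ y), sq_nonneg ‖bloch x - bloch y‖]
  have henorm_nonneg : 0 ≤ _root_.enorm (x - ω • y) := Real.sqrt_nonneg _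
  rw [← pow_le_pow_iff_left₀ henorm_nonneg (norm_nonneg _) two_ne_zero, henorm, hbloch]
  nlinarith [norm_nonneg (star x ⬝ᵥ y)]

theorem strong_continuity_2x2
    (A : Matrix (Fin 2) (Fin 2) ℂ) :
    ∀ z ∈ NR A, ∀ x : Fin 2 → ℂ, star x ⬝ᵥ x = 1 → fA A x = z →
      ∀ ε > (0:ℝ), ∃ δ > (0:ℝ), ∀ z' ∈ NR A, ‖z' - z‖ < δ →
        ∃ x', star x' ⬝ᵥ x' = 1 ∧ fA A x' = z' ∧ projDist x x' < ε := by
  intro z _ x hx hxz ε hε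
  have hsphere {y : Fin 2 → ℂ} (hy : star y ⬝ᵥ y = 1) : ‖bloch y‖ = 1 :=
    (norm_bloch y).trans (normSq_add_normSq_eq_one hy)
  have hfA {y : Fin 2 → ℂ} (hy : star y ⬝ᵥ y = 1) := fA_eq_pauliPairing_bloch_add A hy
  obtain ⟨δ, hδ, hlift⟩ :=
    (pauliPairing A).exists_near_sphere_preimage (hsphere hx) hε
  refine ⟨δ, hδ, ?_⟩
  rintro _ ⟨y, hy, rfl⟩ hyx
  rw [← hxz, hfA hx, hfA hy, add_sub_add_right_eq_sub] at hyx
  obtain ⟨n, hn, hny, hnx⟩ := hlift (bloch y) (hsphere hy) hyx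
  obtain ⟨x', hx', rfl⟩ := bloch_surjective hn
  refine ⟨x', hx', by rw [hfA hx', hny, ← hfA hy], ?_⟩
  calc projDist x x' ≤ ‖bloch x - bloch x'‖ := projDist_le_norm_bloch_sub hx hx'
    _ < ε := by rwa [norm_sub_rev]
end

section
/- Let A ∈ M₄(ℂ) be given by A = H + iK with H = diag(0,0,1,1) and K the real symmetric matrix with K₁₃ = K₃₁ = k₁, K₂₄ = K₄₂ = k₂, K₃₄ = K₄₃ = r, all other entries zero, where k₁ > k₂ > 0 and r > 0. Then A is unitarily irreducible, i.e., H and K have no common nontrivial invariant subspace. -/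
open Matrix

/-!
`H` is the orthogonal projection onto the span of `e₂, e₃`, so a common invariant subspace `V ≠ 0`
contains a nonzero vector `(0, 0, a, b)`. On such vectors `H K` acts as `r` times the swap of the
two coordinates and `K (1 - H) K` as `diag(k₁², k₂²)`. Since `k₁² ≠ k₂²`, the second operator
separates the coordinates and the first one exchanges them, so `e₂, e₃ ∈ V`; finally
`K e₂ = k₁ e₀ + r e₃` and `K e₃ = k₂ e₁ + r e₂` give `e₀, e₁ ∈ V`.
-/

def kMatrix (k₁ k₂ r : ℂ) : Matrix (Fin 4) (Fin 4) ℂ :=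
  !![0, 0, k₁, 0; 0, 0, 0, k₂; k₁, 0, 0, r; 0, k₂, r, 0]

lemma diagonal_lowerProj_mulVec (v : Fin 4 → ℂ) :
    (diagonal ![0, 0, 1, 1] : Matrix (Fin 4) (Fin 4) ℂ) *ᵥ v = ![0, 0, v 2, v 3] := by
  ext i; fin_cases i <;> simp [mulVec_diagonal]

lemma kMatrix_mulVec (k₁ k₂ r : ℂ) (v : Fin 4 → ℂ) :
    kMatrix k₁ k₂ r *ᵥ v = ![k₁ * v 2, k₂ * v 3, k₁ * v 0 + r * v 3, k₂ * v 1 + r * v 2] := by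
  ext i; fin_cases i <;> simp [kMatrix, mulVec, dotProduct, Fin.sum_univ_four]

section InvariantSubspace

variable {k₁ k₂ r : ℂ} {V : Submodule ℂ (Fin 4 → ℂ)}
  (hH : ∀ v ∈ V, (diagonal ![0, 0, 1, 1] : Matrix (Fin 4) (Fin 4) ℂ) *ᵥ v ∈ V)
  (hK : ∀ v ∈ V, kMatrix k₁ k₂ r *ᵥ v ∈ V)
include hH hK

lemma exists_lower_mem (hk₁ : k₁ ≠ 0) (hk₂ : k₂ ≠ 0) (hV : V ≠ ⊥) :
    ∃ a b : ℂ, (a ≠ 0 ∨ b ≠ 0) ∧ ![0, 0, a, b] ∈ V := by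
  obtain ⟨v, hv, hv0⟩ := V.exists_mem_ne_zero_of_ne_bot hV
  by_cases hlow : v 2 ≠ 0 ∨ v 3 ≠ 0
  · exact ⟨v 2, v 3, hlow, diagonal_lowerProj_mulVec v ▸ hH v hv⟩
  · obtain ⟨h2, h3⟩ : v 2 = 0 ∧ v 3 = 0 := by simpa only [not_or, not_not] using hlow
    have hup : v 0 ≠ 0 ∨ v 1 ≠ 0 := by
      by_contra! h
      exact hv0 (by ext i; fin_cases i <;> simp [h.1, h.2, h2, h3])
    refine ⟨k₁ * v 0, k₂ * v 1, ?_, ?_⟩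
    · rcases hup with h | h
      exacts [.inl (mul_ne_zero hk₁ h), .inr (mul_ne_zero hk₂ h)]
    · simpa [kMatrix_mulVec, h2, h3] using hK v hv

lemma lower_swap_mem (hr : r ≠ 0) {a b : ℂ} (hw : ![0, 0, a, b] ∈ V) :
    ![0, 0, b, a] ∈ V := by
  have hHK := V.smul_mem r⁻¹ (hH _ (hK _ hw))
  convert hHK using 1
  ext i; fin_cases i <;> simp [kMatrix_mulVec, diagonal_lowerProj_mulVec, hr]

lemma lower_sq_mem {a b : ℂ} (hw : ![0, 0, a, b] ∈ V) :
    ![0, 0, k₁ ^ 2 * a, k₂ ^ 2 * b] ∈ V := by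
  have hupper := hK _ (V.sub_mem (hK _ hw) (hH _ (hK _ hw)))
  convert hupper using 1
  ext i; fin_cases i <;> simp [kMatrix_mulVec, diagonal_lowerProj_mulVec] <;> ring

lemma lower_single_mem (hk : k₁ ^ 2 ≠ k₂ ^ 2) (hr : r ≠ 0) {a b : ℂ} (hab : a ≠ 0 ∨ b ≠ 0)
    (hw : ![0, 0, a, b] ∈ V) : ![0, 0, 1, 0] ∈ V := by
  wlog ha : a ≠ 0 generalizing a b
  · exact this hab.symm (lower_swap_mem hH hK hr hw) (hab.resolve_left ha)
  have hsep := V.smul_mem ((k₁ ^ 2 - k₂ ^ 2) * a)⁻¹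
    (V.sub_mem (lower_sq_mem hH hK hw) (V.smul_mem (k₂ ^ 2) hw))
  convert hsep using 1
  ext i; fin_cases i <;> simp
  field_simp [sub_ne_zero.2 hk]

lemma eq_top_of_lower_mem (hk₁ : k₁ ≠ 0) (hk₂ : k₂ ≠ 0) (hk : k₁ ^ 2 ≠ k₂ ^ 2) (hr : r ≠ 0)
    {a b : ℂ} (hab : a ≠ 0 ∨ b ≠ 0) (hw : ![0, 0, a, b] ∈ V) : V = ⊤ := by
  have he₂ := lower_single_mem hH hK hk hr hab hw
  have he₃ := lower_swap_mem hH hK hr he₂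
  have he₀ := V.smul_mem k₁⁻¹ (V.sub_mem (hK _ he₂) (V.smul_mem r he₃))
  have he₁ := V.smul_mem k₂⁻¹ (V.sub_mem (hK _ he₃) (V.smul_mem r he₂))
  rw [eq_top_iff, ← (Pi.basisFun ℂ (Fin 4)).span_eq, Submodule.span_le]
  rintro _ ⟨i, rfl⟩
  rw [SetLike.mem_coe]
  fin_cases i
  · convert he₀ using 1; ext j; fin_cases j <;> simp [kMatrix_mulVec, hk₁]
  · convert he₁ using 1; ext j; fin_cases j <;> simp [kMatrix_mulVec, hk₂]
  · convert he₂ using 1; ext j; fin_cases j <;> simp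
  · convert he₃ using 1; ext j; fin_cases j <;> simp

end InvariantSubspace

theorem concrete_4x4_unitarily_irreducible
    (k₁ k₂ r : ℝ) (hk : k₂ < k₁) (hk₂ : 0 < k₂) (hr : 0 < r) :
    let H : Matrix (Fin 4) (Fin 4) ℂ := Matrix.diagonal ![0,0,1,1]
    let K : Matrix (Fin 4) (Fin 4) ℂ :=
      !![0,0,(k₁:ℂ),0; 0,0,0,(k₂:ℂ); (k₁:ℂ),0,0,(r:ℂ); 0,(k₂:ℂ),(r:ℂ),0]
    ¬ ∃ V : Submodule ℂ (Fin 4 → ℂ), V ≠ ⊥ ∧ V ≠ ⊤ ∧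
      (∀ v ∈ V, H.mulVec v ∈ V) ∧ (∀ v ∈ V, K.mulVec v ∈ V) := by
  rintro H K ⟨V, hbot, htop, hH, hK⟩
  change ∀ v ∈ V, kMatrix k₁ k₂ r *ᵥ v ∈ V at hK
  have hk₁' : (k₁ : ℂ) ≠ 0 := by exact_mod_cast (hk₂.trans hk).ne'
  have hk₂' : (k₂ : ℂ) ≠ 0 := by exact_mod_cast hk₂.ne'
  have hr' : (r : ℂ) ≠ 0 := by exact_mod_cast hr.ne'
  have hsq : (k₁ : ℂ) ^ 2 ≠ (k₂ : ℂ) ^ 2 := by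
    exact_mod_cast (pow_lt_pow_left₀ hk hk₂.le two_ne_zero).ne'
  obtain ⟨a, b, hab, hw⟩ := exists_lower_mem hH hK hk₁' hk₂' hbot
  exact htop (eq_top_of_lower_mem hH hK hk₁' hk₂' hsq hr' hab hw)
end
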